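/- Let φ be a monotone 1-in-3 SAT instance with n variables and m clauses in which every variable occurs in at least one clause, and let G_φ be the associated classified matching instance. Then there exists a feasible matching M in G_φ with signature (3m + n, 3m + n) — i.e., exactly 3m + n applicants are matched to their rank-1 post and exactly 3m + n applicants are matched to their rank-2 post (so all 2n + 6m applicants are matched) — if and only if φ has a 1-in-3 satisfying assignment. -/

import Mathlib

open scoped Classical

/-- Applicants of the instance `G_φ`: `av i = aᵢ`, `bv i = bᵢ`,
`ac i j = a_{ij}` and `bc i j = b_{ij}` (the latter two meaningful when `i ∈ C_j`). -/
inductive App (n m : ℕ) where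
  | av (i : Fin n) : App n m
  | bv (i : Fin n) : App n m
  | ac (i : Fin n) (j : Fin m) : App n m
  | bc (i : Fin n) (j : Fin m) : App n m
  deriving DecidableEq, Fintype

/-- Posts of the instance `G_φ`: `pv i = pᵢ`, `pt i = pᵢᵗ`, `pf i = pᵢᶠ`
and `pc j = pⱼᶜ`. -/
inductive Post (n m : ℕ) where
  | pv (i : Fin n) : Post n m
  | pt (i : Fin n) : Post n m
  | pf (i : Fin n) : Post n m
  | pc (j : Fin m) : Post n m
  deriving DecidableEq, Fintype

namespace Red

variable {n m : ℕ}

/-- The rank-1 (first-choice) post of each applicant. -/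
def rank1 : App n m → Post n m
  | .av i => .pv i
  | .bv i => .pv i
  | .ac _ j => .pc j
  | .bc _ j => .pc j

/-- The rank-2 (second-choice) post of each applicant. -/
def rank2 : App n m → Post n m
  | .av i => .pt i
  | .bv i => .pf i
  | .ac i _ => .pt i
  | .bc i _ => .pf i

/-- The rank of a post on an applicant's preference list (3 = unacceptable). -/
def rk (x : App n m) (p : Post n m) : ℕ :=
  if p = rank1 x then 1 else if p = rank2 x then 2 else 3

/-- Only pairs `(i, j)` with `i ∈ C_j` give rise to applicants `a_{ij}`, `b_{ij}`. -/
def Valid (Cl : Fin m → Finset (Fin n)) : App n m → Prop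
  | .av _ => True
  | .bv _ => True
  | .ac i j => i ∈ Cl j
  | .bc i j => i ∈ Cl j

/-- `k_i`: the number of clauses containing variable `i`. -/
def occ (Cl : Fin m → Finset (Fin n)) (i : Fin n) : ℕ :=
  (Finset.univ.filter fun j => i ∈ Cl j).card

/-- `M` is a matching of `G_φ`: each (existing) applicant is assigned to at most one
post on its preference list. -/
def IsMatching (Cl : Fin m → Finset (Fin n)) (M : App n m → Option (Post n m)) : Prop :=
  ∀ x p, M x = some p → Valid Cl x ∧ (p = rank1 x ∨ p = rank2 x)

/-- The number of applicants matched to post `p`. -/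
def cnt (M : App n m → Option (Post n m)) (p : Post n m) : ℕ :=
  (Finset.univ.filter fun x => M x = some p).card

/-- `M` is feasible: all post quotas and all class quotas of `G_φ` are respected. -/
def Feasible (Cl : Fin m → Finset (Fin n)) (M : App n m → Option (Post n m)) : Prop :=
  -- post `pᵢ` has quota 1 and no classes
  (∀ i, cnt M (.pv i) ≤ 1) ∧
  -- post `pⱼᶜ` has quota 3
  (∀ j, cnt M (.pc j) ≤ 3) ∧
  -- class `S_{ij} = {a_{ij}, b_{ij}}` of `pⱼᶜ`, quota 1
  (∀ j, ∀ i ∈ Cl j,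
    (({App.ac i j, App.bc i j} : Finset (App n m)).filter
      fun x => M x = some (.pc j)).card ≤ 1) ∧
  -- class `S_{1j} = {a_{ij} : i ∈ C_j}` of `pⱼᶜ`, quota 1
  (∀ j, ((Cl j).filter fun i => M (.ac i j) = some (.pc j)).card ≤ 1) ∧
  -- class `S_{2j} = {b_{ij} : i ∈ C_j}` of `pⱼᶜ`, quota 2
  (∀ j, ((Cl j).filter fun i => M (.bc i j) = some (.pc j)).card ≤ 2) ∧
  -- post `pᵢᵗ` has quota `k_i`
  (∀ i, cnt M (.pt i) ≤ occ Cl i) ∧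
  -- class `Sⱼᵗ = {a_{ij}, aᵢ}` of `pᵢᵗ`, quota 1
  (∀ i, ∀ j, i ∈ Cl j →
    (({App.ac i j, App.av i} : Finset (App n m)).filter
      fun x => M x = some (.pt i)).card ≤ 1) ∧
  -- post `pᵢᶠ` has quota `k_i`
  (∀ i, cnt M (.pf i) ≤ occ Cl i) ∧
  -- class `Sⱼᶠ = {b_{ij}, bᵢ}` of `pᵢᶠ`, quota 1
  (∀ i, ∀ j, i ∈ Cl j →
    (({App.bc i j, App.bv i} : Finset (App n m)).filter
      fun x => M x = some (.pf i)).card ≤ 1)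

/-- Applicant `x` prefers matching `M` to matching `M'`. -/
def Prefers (M M' : App n m → Option (Post n m)) (x : App n m) : Prop :=
  ∃ p, M x = some p ∧ (M' x = none ∨ ∃ p', M' x = some p' ∧ rk x p < rk x p')

/-- `M'` is more popular than `M`. -/
def MorePopular (M' M : App n m → Option (Post n m)) : Prop :=
  (Finset.univ.filter fun x => Prefers M M' x).card <
    (Finset.univ.filter fun x => Prefers M' M x).card

/-- `M` is popular among all feasible matchings of `G_φ`. -/
def Popular (Cl : Fin m → Finset (Fin n)) (M : App n m → Option (Post n m)) : Prop :=
  IsMatching Cl M ∧ Feasible Cl M ∧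
    ∀ M', IsMatching Cl M' → Feasible Cl M' → ¬ MorePopular M' M

/-- `φ` has a 1-in-3 satisfying assignment. -/
def OneInThree (Cl : Fin m → Finset (Fin n)) : Prop :=
  ∃ η : Fin n → Bool, ∀ j, ((Cl j).filter fun i => η i = true).card = 1

end Red

/-!
A matching of signature `(3m + n, 3m + n)` matches all `2n + 6m` applicants, since rank-1 and
rank-2 edges are disjoint. Put `η i := (aᵢ is matched to pᵢᵗ)`. If `η i` holds, the class
`Sⱼᵗ` pushes `a_{ij}` onto `pⱼᶜ`; otherwise `aᵢ` occupies `pᵢ`, so `bᵢ` sits on `pᵢᶠ` and the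
class `Sⱼᶠ` pushes `b_{ij}` onto `pⱼᶜ`. The quotas 1 of `S_{1j}` and 2 of `S_{2j}` then allow
exactly one true variable in each clause.

Conversely, a 1-in-3 assignment sends `aᵢ`, `b_{ij}` to their second and `bᵢ`, `a_{ij}` to their
first choices when `i` is true, and the other way round when `i` is false. Every assignment gives
the signature `(3m + n, 3m + n)`; the 1-in-3 property is what keeps `S_{1j}` and `S_{2j}` within
their quotas.
-/

namespace Red

variable {n m : ℕ}

open Finset

def appEquiv (n m : ℕ) :
    (Fin n ⊕ Fin n) ⊕ ((Fin m × Fin n) ⊕ (Fin m × Fin n)) ≃ App n m where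
  toFun
    | .inl (.inl i) => .av i
    | .inl (.inr i) => .bv i
    | .inr (.inl (j, i)) => .ac i j
    | .inr (.inr (j, i)) => .bc i j
  invFun
    | .av i => .inl (.inl i)
    | .bv i => .inl (.inr i)
    | .ac i j => .inr (.inl (j, i))
    | .bc i j => .inr (.inr (j, i))
  left_inv x := by rcases x with (i | i) | (⟨j, i⟩ | ⟨j, i⟩) <;> rfl
  right_inv x := by cases x <;> rfl

theorem card_filter_app (P : App n m → Prop) [DecidablePred P] :
    #{x | P x} = #{i | P (.av i)} + #{i | P (.bv i)}
      + ∑ j, #{i | P (.ac i j)} + ∑ j, #{i | P (.bc i j)} := by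
  simp only [card_filter]
  rw [← (appEquiv n m).sum_comp]
  simp only [Fintype.sum_sum_type, Fintype.sum_prod_type, ← add_assoc]
  rfl

theorem card_valid (Cl : Fin m → Finset (Fin n)) (h3 : ∀ j, #(Cl j) = 3) :
    #{x | Valid Cl x} = 2 * n + 6 * m := by
  have hac (j : Fin m) : ({i | Valid Cl (.ac i j)} : Finset (Fin n)) = Cl j := by
    ext; rw [mem_filter]; simp [Valid]
  have hbc (j : Fin m) : ({i | Valid Cl (.bc i j)} : Finset (Fin n)) = Cl j := by
    ext; rw [mem_filter]; simp [Valid]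
  have hv (i : Fin n) : Valid Cl (.av i) ∧ Valid Cl (.bv i) := ⟨trivial, trivial⟩
  rw [card_filter_app, filter_true_of_mem fun i _ => (hv i).1,
    filter_true_of_mem fun i _ => (hv i).2]
  simp [hac, hbc, h3]
  ring

theorem rank1_ne_rank2 (x : App n m) : rank1 x ≠ rank2 x := by
  cases x <;> simp [rank1, rank2]

section Backward

variable (Cl : Fin m → Finset (Fin n)) (η : Fin n → Bool)

def firstChoice : App n m → Bool
  | .av i => !η i
  | .bv i => η i
  | .ac i _ => η i
  | .bc i _ => !η i

noncomputable def matchingOf (x : App n m) : Option (Post n m) :=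
  if Valid Cl x then some (if firstChoice η x then rank1 x else rank2 x) else none

theorem matchingOf_isMatching : IsMatching Cl (matchingOf Cl η) := by
  intro x p h
  unfold matchingOf at h
  split_ifs at h with hx hf <;> cases h
  exacts [⟨hx, .inl rfl⟩, ⟨hx, .inr rfl⟩]

theorem matchingOf_eq_some_rank1_iff (x : App n m) :
    matchingOf Cl η x = some (rank1 x) ↔ Valid Cl x ∧ firstChoice η x = true := by
  have := (rank1_ne_rank2 x).symm
  by_cases hx : Valid Cl x <;> cases hf : firstChoice η x <;> simp_all [matchingOf]

theorem matchingOf_eq_some_rank2_iff (x : App n m) :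
    matchingOf Cl η x = some (rank2 x) ↔ Valid Cl x ∧ firstChoice η x = false := by
  have := rank1_ne_rank2 x
  by_cases hx : Valid Cl x <;> cases hf : firstChoice η x <;> simp_all [matchingOf]

theorem card_valid_firstChoice_eq (h3 : ∀ j, #(Cl j) = 3) (b : Bool) :
    #{x | Valid Cl x ∧ firstChoice η x = b} = 3 * m + n := by
  have hvar : #{i | Valid Cl (.av i) ∧ firstChoice η (App.av (m := m) i) = b}
      + #{i | Valid Cl (.bv i) ∧ firstChoice η (App.bv (m := m) i) = b} = n := by
    simp only [card_filter, ← sum_add_distrib]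
    calc _ = ∑ _i : Fin n, 1 := sum_congr rfl fun i _ => by
          cases hi : η i <;> cases b <;> simp [Valid, firstChoice, hi]
      _ = n := by simp
  have hclause (j : Fin m) : #{i | Valid Cl (.ac i j) ∧ firstChoice η (.ac i j) = b}
      + #{i | Valid Cl (.bc i j) ∧ firstChoice η (.bc i j) = b} = 3 := by
    simp only [card_filter, ← sum_add_distrib]
    calc _ = ∑ i, if i ∈ Cl j then 1 else 0 := sum_congr rfl fun i _ => by
          by_cases hi : i ∈ Cl j <;> cases hη : η i <;> cases b <;>
            simp [Valid, firstChoice, hi, hη]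
      _ = 3 := by simp [h3]
  rw [card_filter_app, add_assoc, ← sum_add_distrib, hvar, sum_congr rfl fun j _ => hclause j]
  simp
  ring

variable {Cl η}

@[simp] theorem matchingOf_av (i : Fin n) :
    matchingOf Cl η (.av i) = some (if η i then .pt i else .pv i) := by
  cases hi : η i <;> simp [matchingOf, Valid, firstChoice, rank1, rank2, hi]

@[simp] theorem matchingOf_bv (i : Fin n) :
    matchingOf Cl η (.bv i) = some (if η i then .pv i else .pf i) := by
  cases hi : η i <;> simp [matchingOf, Valid, firstChoice, rank1, rank2, hi]

@[simp] theorem matchingOf_ac (i : Fin n) (j : Fin m) :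
    matchingOf Cl η (.ac i j) =
      if i ∈ Cl j then some (if η i then .pc j else .pt i) else none := by
  cases hi : η i <;> simp [matchingOf, Valid, firstChoice, rank1, rank2, hi]

@[simp] theorem matchingOf_bc (i : Fin n) (j : Fin m) :
    matchingOf Cl η (.bc i j) =
      if i ∈ Cl j then some (if η i then .pf i else .pc j) else none := by
  cases hi : η i <;> simp [matchingOf, Valid, firstChoice, rank1, rank2, hi]

theorem cnt_le_card_of_forall_mem {M : App n m → Option (Post n m)} {p : Post n m}
    {s : Finset (App n m)} (h : ∀ x, M x = some p → x ∈ s) : cnt M p ≤ #s :=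
  card_le_card fun x hx => h x (mem_filter.1 hx).2

theorem matchingOf_feasible (h3 : ∀ j, #(Cl j) = 3) (hocc : ∀ i, ∃ j, i ∈ Cl j)
    (hη : ∀ j, #((Cl j).filter fun i => η i = true) = 1) :
    Feasible Cl (matchingOf Cl η) := by
  refine ⟨fun i => ?_, fun j => ?_, fun j i hij => ?_, fun j => ?_, fun j => ?_,
    fun i => ?_, fun i j hij => ?_, fun i => ?_, fun i j hij => ?_⟩
  · refine (cnt_le_card_of_forall_mem (s := {if η i then .bv i else .av i}) ?_).trans
      (card_singleton _).le
    rintro (i' | i' | ⟨i', j⟩ | ⟨i', j⟩) h <;> cases hi : η i' <;> aesop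
  · refine (cnt_le_card_of_forall_mem
      (s := (Cl j).image fun i => if η i then .ac i j else .bc i j) ?_).trans
      (card_image_le.trans (h3 j).le)
    rintro (i | i | ⟨i, j'⟩ | ⟨i, j'⟩) h <;> cases hi : η i <;> aesop
  · cases hi : η i <;> rw [filter_insert, filter_singleton] <;> simp [hij, hi]
  · rw [← hη j]
    exact (congrArg card (filter_congr fun i hi => by cases hb : η i <;> simp [hi, hb])).le
  · have hfalse : (Cl j).filter (fun i => matchingOf Cl η (.bc i j) = some (.pc j))
        = (Cl j).filter (fun i => ¬ η i = true) :=
      filter_congr fun i hi => by cases hb : η i <;> simp [hi, hb]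
    have hsplit := card_filter_add_card_filter_not (s := Cl j) (p := fun i => η i = true)
    rw [hfalse]
    have := hη j; have := h3 j; omega
  · refine (cnt_le_card_of_forall_mem
      (s := ({j | i ∈ Cl j} : Finset _).image fun j => if η i then .av i else .ac i j) ?_).trans
      card_image_le
    rintro (i' | i' | ⟨i', j⟩ | ⟨i', j⟩) h <;> cases hi : η i' <;> aesop
  · cases hi : η i <;> rw [filter_insert, filter_singleton] <;> simp [hij, hi]
  · refine (cnt_le_card_of_forall_mem
      (s := ({j | i ∈ Cl j} : Finset _).image fun j => if η i then .bc i j else .bv i) ?_).trans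
      card_image_le
    rintro (i' | i' | ⟨i', j⟩ | ⟨i', j⟩) h <;> cases hi : η i' <;> aesop
  · cases hi : η i <;> rw [filter_insert, filter_singleton] <;> simp [hij, hi]

end Backward

section Forward

variable {Cl : Fin m → Finset (Fin n)} {M : App n m → Option (Post n m)}

theorem IsMatching.eq_rank1_or_rank2_of_signature (hM : IsMatching Cl M)
    (h3 : ∀ j, #(Cl j) = 3) (h1 : #{x | M x = some (rank1 x)} = 3 * m + n)
    (h2 : #{x | M x = some (rank2 x)} = 3 * m + n) {x : App n m} (hx : Valid Cl x) :
    M x = some (rank1 x) ∨ M x = some (rank2 x) := by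
  have hdisj : Disjoint (univ.filter fun x => M x = some (rank1 x))
      (univ.filter fun x => M x = some (rank2 x)) :=
    disjoint_filter.2 fun x _ h1 h2 => rank1_ne_rank2 x (Option.some.inj (h1.symm.trans h2))
  have hsub : (univ.filter fun x => M x = some (rank1 x))
      ∪ (univ.filter fun x => M x = some (rank2 x)) ⊆ univ.filter (Valid Cl) := by
    intro x hx
    simp only [mem_union, mem_filter, mem_univ, true_and] at hx ⊢
    exact hx.elim (fun h => (hM x _ h).1) (fun h => (hM x _ h).1)
  have heq := eq_of_subset_of_card_le hsub
    (by rw [card_valid Cl h3, card_union_of_disjoint hdisj, h1, h2]; omega)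
  have hmem : x ∈ univ.filter (Valid Cl) := mem_filter.2 ⟨mem_univ x, hx⟩
  simpa [← heq] using hmem

theorem ac_eq_pc_of_av_eq_pt (hF : Feasible Cl M)
    (hall : ∀ x, Valid Cl x → M x = some (rank1 x) ∨ M x = some (rank2 x))
    {i : Fin n} {j : Fin m} (hij : i ∈ Cl j)
    (hav : M (.av i) = some (.pt i)) : M (.ac i j) = some (.pc j) := by
  obtain ⟨-, -, -, -, -, -, hSt, -, -⟩ := hF
  refine (hall (.ac i j) hij).resolve_right fun hac => ?_
  have := card_le_one.1 (hSt i j hij) (.ac i j) (by simpa [rank2] using hac)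
    (.av i) (by simpa using hav)
  simp at this

theorem bc_eq_pc_of_av_ne_pt (hF : Feasible Cl M)
    (hall : ∀ x, Valid Cl x → M x = some (rank1 x) ∨ M x = some (rank2 x))
    {i : Fin n} {j : Fin m} (hij : i ∈ Cl j)
    (hav : M (.av i) ≠ some (.pt i)) : M (.bc i j) = some (.pc j) := by
  obtain ⟨hpv, -, -, -, -, -, -, -, hSf⟩ := hF
  have hav' : M (.av i) = some (.pv i) := (hall (.av i) trivial).resolve_right hav
  have hbv : M (.bv i) = some (.pf i) := (hall (.bv i) trivial).resolve_left fun hbv => by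
    have := card_le_one.1 (hpv i) (.av i) (mem_filter.2 ⟨mem_univ _, hav'⟩) (.bv i)
      (mem_filter.2 ⟨mem_univ _, hbv⟩)
    simp at this
  refine (hall (.bc i j) hij).resolve_right fun hbc => ?_
  have := card_le_one.1 (hSf i j hij) (.bc i j) (by simpa [rank2] using hbc)
    (.bv i) (by simpa using hbv)
  simp at this

theorem oneInThree_of_feasible (h3 : ∀ j, #(Cl j) = 3) (hF : Feasible Cl M)
    (hall : ∀ x, Valid Cl x → M x = some (rank1 x) ∨ M x = some (rank2 x)) :
    OneInThree Cl := by
  refine ⟨fun i => decide (M (.av i) = some (.pt i)), fun j => ?_⟩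
  beta_reduce
  have htrue : (Cl j).filter (fun i => decide (M (.av i) = some (.pt i)) = true)
      ⊆ (Cl j).filter (fun i => M (.ac i j) = some (.pc j)) := by
    intro i
    simp only [mem_filter, decide_eq_true_eq]
    exact fun ⟨hij, hav⟩ => ⟨hij, ac_eq_pc_of_av_eq_pt hF hall hij hav⟩
  have hfalse : (Cl j).filter (fun i => ¬ decide (M (.av i) = some (.pt i)) = true)
      ⊆ (Cl j).filter (fun i => M (.bc i j) = some (.pc j)) := by
    intro i
    simp only [mem_filter, decide_eq_true_eq]
    exact fun ⟨hij, hav⟩ => ⟨hij, bc_eq_pc_of_av_ne_pt hF hall hij hav⟩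
  have hsplit := card_filter_add_card_filter_not (s := Cl j)
    (p := fun i => decide (M (.av i) = some (.pt i)) = true)
  obtain ⟨-, -, -, hS1, hS2, -⟩ := hF
  have := card_le_card htrue; have := card_le_card hfalse
  have := hS1 j; have := hS2 j; have := h3 j
  omega

end Forward

end Red

/-- for a monotone 1-in-3 SAT instance `φ` (clauses of size exactly 3,
every variable occurring in some clause), the instance `G_φ` admits a feasible matching
of signature `(3m + n, 3m + n)` — exactly `3m + n` applicants matched to their rank-1
post and exactly `3m + n` to their rank-2 post — iff `φ` has a 1-in-3 satisfying
assignment. -/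
theorem stmt14 (n m : ℕ) (Cl : Fin m → Finset (Fin n))
    (h3 : ∀ j, (Cl j).card = 3) (hocc : ∀ i, ∃ j, i ∈ Cl j) :
    (∃ M : App n m → Option (Post n m), Red.IsMatching Cl M ∧ Red.Feasible Cl M ∧
      (Finset.univ.filter fun x => M x = some (Red.rank1 x)).card = 3 * m + n ∧
      (Finset.univ.filter fun x => M x = some (Red.rank2 x)).card = 3 * m + n) ↔
    Red.OneInThree Cl := by
  constructor
  · rintro ⟨M, hM, hF, h1, h2⟩
    exact Red.oneInThree_of_feasible h3 hF
      fun x hx => hM.eq_rank1_or_rank2_of_signature h3 h1 h2 hx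
  · rintro ⟨η, hη⟩
    refine ⟨Red.matchingOf Cl η, Red.matchingOf_isMatching Cl η,
      Red.matchingOf_feasible h3 hocc hη, ?_, ?_⟩
    · simp_rw [Red.matchingOf_eq_some_rank1_iff]
      exact Red.card_valid_firstChoice_eq Cl η h3 true
    · simp_rw [Red.matchingOf_eq_some_rank2_iff]
      exact Red.card_valid_firstChoice_eq Cl η h3 false
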